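/- arXiv:1602.00651 — 7 statements merged into one kernel-verified Lean document; each statement's English description precedes it below -/
import Mathlib

section
/- Let K be a field, m, σ ≥ 1, E ∈ K^{m×σ} with rows e_1,…,e_m, and J ∈ K^{σ×σ}. Then the set of interpolants for (E,J) is a K[X]-submodule of K[X]^{1×m} which is free of rank m. -/
open Polynomial Matrix

/-- Degree of a polynomial as an element of `WithBot ℤ`, with `degZ 0 = ⊥`. -/
noncomputable def degZ {K : Type*} [Field K] (p : Polynomial K) : WithBot ℤ :=
  p.degree.map (fun n : ℕ => (n : ℤ))

/-- The `s`-degree of a row vector `p`: `max_j (deg p_j + s_j)`. -/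
noncomputable def sdeg {K : Type*} [Field K] {ι : Type*} [Fintype ι]
    (s : ι → ℤ) (p : ι → Polynomial K) : WithBot ℤ :=
  Finset.univ.sup fun j => degZ (p j) + (s j : WithBot ℤ)

/-- `j` is the `s`-pivot index of the row `p`: the largest index at which the
`s`-degree of `p` is attained. -/
def IsPivotIndex {K : Type*} [Field K] {ι : Type*} [Fintype ι] [LinearOrder ι]
    (s : ι → ℤ) (p : ι → Polynomial K) (j : ι) : Prop :=
  degZ (p j) + (s j : WithBot ℤ) = sdeg s p ∧
    ∀ k, j < k → degZ (p k) + (s k : WithBot ℤ) ≠ sdeg s p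

/-- `P` is in `s`-Popov form: it is nonsingular, the `s`-pivot entries are monic and
on the diagonal, and in each column the nonpivot entries have degree less than
the pivot entry. -/
def IsPopov {K : Type*} [Field K] {m : ℕ} (s : Fin m → ℤ)
    (P : Matrix (Fin m) (Fin m) (Polynomial K)) : Prop :=
  P.det ≠ 0 ∧ (∀ i, IsPivotIndex s (P i) i) ∧ (∀ i, (P i i).Monic) ∧
    ∀ i j, i ≠ j → (P i j).degree < (P j j).degree

/-- `p` is an interpolant for `(E, J)`: `∑ i, (row i of E) ⋅ (p i)(J) = 0`. -/
def IsInterpolant {K : Type*} [Field K] {ι n : Type*} [Fintype ι] [Fintype n] [DecidableEq n]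
    (E : Matrix ι n K) (J : Matrix n n K) (p : ι → Polynomial K) : Prop :=
  ∑ i, Matrix.vecMul (E i) (Polynomial.aeval J (p i)) = 0

/-- `P` is an interpolation basis for `(E, J)`: its rows form a basis of the
`K[X]`-module of interpolants for `(E, J)`. -/
def IsInterpolationBasis {K : Type*} [Field K] {ι n : Type*} [Fintype ι] [Fintype n]
    [DecidableEq n] (E : Matrix ι n K) (J : Matrix n n K)
    (P : Matrix ι ι (Polynomial K)) : Prop :=
  LinearIndependent (Polynomial K) (fun i => P i) ∧
    (Submodule.span (Polynomial K) (Set.range fun i => P i) : Set (ι → Polynomial K))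
      = {p | IsInterpolant E J p}

/-- The product `Q ⋅ E`: the matrix over `K` whose `i`-th row is `∑ j, (E j) ⋅ (Q i j)(J)`. -/
noncomputable def polMulMat {K : Type*} [Field K] {κ ι n : Type*} [Fintype κ] [Fintype ι]
    [Fintype n] [DecidableEq n]
    (Q : Matrix κ ι (Polynomial K)) (E : Matrix ι n K) (J : Matrix n n K) : Matrix κ n K :=
  fun i => ∑ j, Matrix.vecMul (E j) (Polynomial.aeval J (Q i j))

/-- The `s`-leading matrix of `R`: if row `i` has `s`-degree `d`, its `(i,j)` entry is
the coefficient of degree `d - s j` in `R i j` (and `0` if row `i` is zero). -/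
noncomputable def leadingMatrix {K : Type*} [Field K] {ι : Type*} [Fintype ι]
    (s : ι → ℤ) (R : Matrix ι ι (Polynomial K)) : Matrix ι ι K := fun i j =>
  WithBot.recBotCoe 0
    (fun d => if 0 ≤ d - s j then (R i j).coeff (d - s j).toNat else 0)
    (sdeg s (R i))

/-! Interpolants form a submodule of the free module `K[X]^m`, hence a free module since `K[X]` is a
principal ideal domain. By Cayley–Hamilton every row vector multiplied by the characteristic polynomial
of `J` is an interpolant, so this submodule contains `χ_J • K[X]^m` and has full rank `m`. -/

namespace Submodule

variable {R M : Type*} [CommRing R] [IsDomain R] [IsNoetherianRing R] [AddCommGroup M]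
  [Module R M] [Module.Free R M] [Module.Finite R M]

theorem finrank_eq_of_smul_mem {N : Submodule R M} {c : R} (hc : c ≠ 0)
    (h : ∀ x : M, c • x ∈ N) : Module.finrank R N = Module.finrank R M := by
  refine le_antisymm N.finrank_le ?_
  let b := Module.finBasis R M
  have hsmul : LinearIndependent R (fun i => c • b i) :=
    b.linearIndependent.map' (LinearMap.lsmul R M c)
      (LinearMap.ker_eq_bot.2 (smul_right_injective M hc))
  have hind : LinearIndependent R (fun i => (⟨c • b i, h _⟩ : N)) :=
    LinearIndependent.of_comp N.subtype hsmul
  simpa using hind.fintype_card_le_finrank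

end Submodule

section

variable {K ι n : Type*} [Field K] [Fintype ι] [Fintype n] [DecidableEq n]

noncomputable def interpolants (E : Matrix ι n K) (J : Matrix n n K) :
    Submodule K[X] (ι → K[X]) where
  carrier := {p | IsInterpolant E J p}
  zero_mem' := by simp [IsInterpolant]
  add_mem' {p q} hp hq := by
    simp_all [IsInterpolant, vecMul_add, Finset.sum_add_distrib]
  smul_mem' c p hp := calc
    ∑ i, E i ᵥ* aeval J (c * p i) = (∑ i, E i ᵥ* aeval J (p i)) ᵥ* aeval J c := by
      simp only [mul_comm c, map_mul, ← vecMul_vecMul, sum_vecMul]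
    _ = 0 := by rw [hp, zero_vecMul]

theorem smul_mem_interpolants_of_aeval_eq_zero {E : Matrix ι n K} {J : Matrix n n K} {q : K[X]}
    (hq : aeval J q = 0) (p : ι → K[X]) : q • p ∈ interpolants E J := by
  simp [interpolants, IsInterpolant, hq]

end

theorem interpolants_form_free_module_of_rank_general {K : Type*} [Field K] {m σ : ℕ}
    (E : Matrix (Fin m) (Fin σ) K) (J : Matrix (Fin σ) (Fin σ) K) :
    ∃ N : Submodule (Polynomial K) (Fin m → Polynomial K),
      (N : Set (Fin m → Polynomial K)) = {p | IsInterpolant E J p} ∧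
        Nonempty (Module.Basis (Fin m) (Polynomial K) N) := by
  refine ⟨interpolants E J, rfl, ?_⟩
  have hrank : Module.finrank K[X] (interpolants E J) = m := by
    simpa using (interpolants E J).finrank_eq_of_smul_mem J.charpoly_monic.ne_zero
      (smul_mem_interpolants_of_aeval_eq_zero J.aeval_self_charpoly)
  exact ⟨Module.finBasisOfFinrankEq _ _ hrank⟩

/-- the set of interpolants for `(E, J)` is a `K[X]`-submodule of
`K[X]^{1×m}` which is free of rank `m`. -/
theorem interpolants_form_free_module_of_rank {K : Type*} [Field K] {m σ : ℕ}
    (hm : 1 ≤ m) (hσ : 1 ≤ σ)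
    (E : Matrix (Fin m) (Fin σ) K) (J : Matrix (Fin σ) (Fin σ) K) :
    ∃ N : Submodule (Polynomial K) (Fin m → Polynomial K),
      (N : Set (Fin m → Polynomial K)) = {p | IsInterpolant E J p} ∧
        Nonempty (Module.Basis (Fin m) (Polynomial K) N) :=
  interpolants_form_free_module_of_rank_general E J
end

section
/- Let K be a field, m, σ ≥ 1, E ∈ K^{m×σ}, J ∈ K^{σ×σ}, and s ∈ ℤ^m. If P ∈ K[X]^{m×m} is an interpolation basis for (E,J) which is in s-Popov form, and δ_1,…,δ_m are the degrees of its diagonal entries, then δ_1 + ⋯ + δ_m ≤ σ. -/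
open Polynomial Matrix

/-!
The vectors `p ∈ K[X]^m` with `deg p_i < δ_i` form a `K`-space of dimension `δ_1 + ⋯ + δ_m`,
and the `K`-linear map `p ↦ ∑ e_i ⋅ p_i(J)` into `K^σ` is injective on it: an element of its
kernel is an interpolant, hence a combination `q ⋅ P` of the rows of `P`, and by the predictable
degree property of the Popov form a nonzero such combination has some coordinate `j` of degree at
least `δ_j`.
-/

lemma degZ_of_ne_zero {K : Type*} [Field K] {p : K[X]} (hp : p ≠ 0) :
    degZ p = ((p.natDegree : ℤ) : WithBot ℤ) := by
  rw [degZ, degree_eq_natDegree hp]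
  rfl

section Pivot

variable {K : Type*} [Field K] {ι : Type*} [Fintype ι] [LinearOrder ι]
  {s : ι → ℤ} {p : ι → K[X]} {i k : ι}

lemma IsPivotIndex.natDegree_add_le (hi : IsPivotIndex s p i) (hpi : p i ≠ 0)
    (hpk : p k ≠ 0) : ((p k).natDegree : ℤ) + s k ≤ (p i).natDegree + s i := by
  have hle : degZ (p k) + (s k : WithBot ℤ) ≤ sdeg s p :=
    Finset.le_sup (f := fun k => degZ (p k) + (s k : WithBot ℤ)) (Finset.mem_univ k)
  rwa [← hi.1, degZ_of_ne_zero hpi, degZ_of_ne_zero hpk, ← WithBot.coe_add,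
    ← WithBot.coe_add, WithBot.coe_le_coe] at hle

lemma IsPivotIndex.natDegree_add_lt (hi : IsPivotIndex s p i) (hpi : p i ≠ 0)
    (hpk : p k ≠ 0) (hik : i < k) : ((p k).natDegree : ℤ) + s k < (p i).natDegree + s i := by
  refine (hi.natDegree_add_le hpi hpk).lt_of_ne fun h => hi.2 k hik ?_
  rw [← hi.1, degZ_of_ne_zero hpi, degZ_of_ne_zero hpk, ← WithBot.coe_add,
    ← WithBot.coe_add, h]

end Pivot

section PredictableDegree

variable {K : Type*} [Field K] {ι : Type*} [Fintype ι] [LinearOrder ι]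
  {s : ι → ℤ} {P : Matrix ι ι K[X]}

/-- The predictable degree property. -/
theorem exists_degree_diag_le_vecMul (hpiv : ∀ i, IsPivotIndex s (P i) i)
    (hdiag : ∀ i, P i i ≠ 0) {q : ι → K[X]} (hq : q ≠ 0) :
    ∃ j, (P j j).degree ≤ ((q ᵥ* P) j).degree := by
  classical
  obtain ⟨i₀, hi₀⟩ := Function.ne_iff.1 hq
  -- ties in `d` go to the largest index, where the pivot condition of every row `i < j` is strict
  let d : ι → ℤ := fun i => (q i).natDegree + (P i i).natDegree + s i
  obtain ⟨j, hj, hjmax⟩ := (Finset.univ.filter fun i => q i ≠ 0).exists_max_image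
    (fun i => toLex (d i, i)) ⟨i₀, by simpa using hi₀⟩
  rw [Finset.mem_filter] at hj
  set N := (q j).natDegree + (P j j).natDegree
  have hsmall : ∀ i ≠ j, (q i * P i j).degree < N := by
    intro i hij
    by_cases hqi : q i = 0
    · simp [hqi]
    by_cases hPij : P i j = 0
    · simp [hPij]
    rw [degree_mul, degree_eq_natDegree hqi, degree_eq_natDegree hPij, ← Nat.cast_add,
      Nat.cast_lt, ← Nat.cast_lt (α := ℤ)]
    have hlex := (hjmax i (by simpa using hqi)).lt_of_ne (by simp [hij])
    rcases Prod.Lex.toLex_lt_toLex.1 hlex with hd | ⟨hd, hlt⟩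
    · have := (hpiv i).natDegree_add_le (hdiag i) hPij
      simp only [d] at hd
      push_cast [N]
      linarith
    · have := (hpiv i).natDegree_add_lt (hdiag i) hPij hlt
      simp only [d] at hd
      push_cast [N]
      linarith
  have hcoeff : ((q ᵥ* P) j).coeff N = (q j).leadingCoeff * (P j j).leadingCoeff := by
    rw [vecMul, dotProduct, finsetSum_coeff, Finset.sum_eq_single j
      (fun i _ hij => coeff_eq_zero_of_degree_lt (hsmall i hij)) (by simp),
      coeff_mul_degree_add_degree]
  have hne : ((q ᵥ* P) j).coeff N ≠ 0 := by
    rw [hcoeff]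
    exact mul_ne_zero (leadingCoeff_ne_zero.2 hj.2) (leadingCoeff_ne_zero.2 (hdiag j))
  refine ⟨j, ?_⟩
  rw [degree_eq_natDegree (hdiag j), degree_eq_natDegree (fun h => hne (by simp [h]))]
  exact_mod_cast (Nat.le_add_left _ _).trans (le_natDegree_of_ne_zero hne)

theorem eq_zero_of_mem_span_of_degree_lt (hpiv : ∀ i, IsPivotIndex s (P i) i)
    (hdiag : ∀ i, P i i ≠ 0) {p : ι → K[X]}
    (hp : p ∈ Submodule.span K[X] (Set.range fun i => P i))
    (hdeg : ∀ i, (p i).degree < (P i i).degree) : p = 0 := by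
  obtain ⟨q, rfl⟩ := (Submodule.mem_span_range_iff_exists_fun K[X]).1 hp
  rw [← vecMul_eq_sum] at hdeg ⊢
  by_contra hne
  obtain ⟨j, hj⟩ := exists_degree_diag_le_vecMul hpiv hdiag (q := q) fun hq => hne (by simp [hq])
  exact (hdeg j).not_ge hj

end PredictableDegree

noncomputable def interpolantMap {K : Type*} [Field K] {ι n : Type*} [Fintype ι] [Fintype n]
    [DecidableEq n] (E : Matrix ι n K) (J : Matrix n n K) : (ι → K[X]) →ₗ[K] n → K where
  toFun p := ∑ i, vecMul (E i) (aeval J (p i))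
  map_add' p q := by simp only [Pi.add_apply, map_add, vecMul_add, Finset.sum_add_distrib]
  map_smul' c p := by
    simp only [Pi.smul_apply, map_smul, vecMul_smul, Finset.smul_sum, RingHom.id_apply]

lemma finrank_pi_degreeLT {K : Type*} [Field K] {ι : Type*} [Fintype ι] (δ : ι → ℕ) :
    Module.finrank K (∀ i, degreeLT K (δ i)) = ∑ i, δ i := by
  simp [Module.finrank_pi_fintype, (degreeLTEquiv K _).finrank_eq]

theorem sum_minimal_degree_le_general {K : Type*} [Field K] {m σ : ℕ}
    (E : Matrix (Fin m) (Fin σ) K) (J : Matrix (Fin σ) (Fin σ) K) (s : Fin m → ℤ)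
    (P : Matrix (Fin m) (Fin m) (Polynomial K))
    (hbasis : IsInterpolationBasis E J P) (hpopov : IsPopov s P)
    (δ : Fin m → ℕ) (hδ : ∀ i, (P i i).natDegree = δ i) :
    ∑ i, δ i ≤ σ := by
  obtain ⟨-, hpiv, hmonic, -⟩ := hpopov
  have hdiag : ∀ i, P i i ≠ 0 := fun i => (hmonic i).ne_zero
  -- the interpolation map on vectors with `deg p_i < δ_i`
  let f := (interpolantMap E J).comp
    (LinearMap.pi fun i => (degreeLT K (δ i)).subtype.comp (LinearMap.proj i))
  have hf : Function.Injective f := by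
    refine (injective_iff_map_eq_zero f).2 fun x hx => ?_
    have hspan : (fun i => (x i : K[X])) ∈ Submodule.span K[X] (Set.range fun i => P i) := by
      rw [← SetLike.mem_coe, hbasis.2]
      exact hx
    have hzero := eq_zero_of_mem_span_of_degree_lt hpiv hdiag hspan fun i => by
      rw [degree_eq_natDegree (hdiag i), hδ]
      exact mem_degreeLT.1 (x i).2
    funext i
    exact Subtype.ext (congrFun hzero i)
  simpa [finrank_pi_degreeLT] using LinearMap.finrank_le_finrank_of_injective hf

/-- if `P` is an interpolation basis for `(E, J)` in `s`-Popov form with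
diagonal degrees `δ`, then `δ 1 + ⋯ + δ m ≤ σ`. -/
theorem sum_minimal_degree_le {K : Type*} [Field K] {m σ : ℕ}
    (hm : 1 ≤ m) (hσ : 1 ≤ σ)
    (E : Matrix (Fin m) (Fin σ) K) (J : Matrix (Fin σ) (Fin σ) K) (s : Fin m → ℤ)
    (P : Matrix (Fin m) (Fin m) (Polynomial K))
    (hbasis : IsInterpolationBasis E J P) (hpopov : IsPopov s P)
    (δ : Fin m → ℕ) (hδ : ∀ i, (P i i).natDegree = δ i) :
    ∑ i, δ i ≤ σ :=
  sum_minimal_degree_le_general E J s P hbasis hpopov δ hδ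
end

section
/- Let K be a field, m ≥ 1, s ∈ ℤ^m, let P1 ∈ K[X]^{m×m} be in s-diagonal weak Popov form with s-pivot degree δ1 = (δ1_1,…,δ1_m), let t = s + δ1 (which equals the s-row degree of P1), and let P2 ∈ K[X]^{m×m} be in t-diagonal weak Popov form with t-pivot degree δ2. Then the product P2·P1 is in s-diagonal weak Popov form with s-pivot degree δ1 + δ2. -/
open Polynomial Matrix

section Helpers

variable {K : Type*} [Field K]

lemma degZ_zero : degZ (0:K[X]) = ⊥ := by simp [degZ]

lemma degZ_eq_bot_iff {p : K[X]} : degZ p = ⊥ ↔ p = 0 := by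
  simp [degZ, WithBot.map_eq_bot_iff, Polynomial.degree_eq_bot]

lemma degZ_of_ne {p : K[X]} (h : p ≠ 0) : degZ p = ((p.natDegree : ℤ) : WithBot ℤ) := by
  rw [degZ, Polynomial.degree_eq_natDegree h]; rfl

lemma degZ_mul (p q : K[X]) : degZ (p*q) = degZ p + degZ q := by
  rcases eq_or_ne p 0 with rfl | hp
  · simp [degZ_zero]
  rcases eq_or_ne q 0 with rfl | hq
  · simp [degZ_zero]
  rw [degZ_of_ne hp, degZ_of_ne hq, degZ_of_ne (mul_ne_zero hp hq),
    Polynomial.natDegree_mul hp hq]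
  push_cast
  rfl

lemma wb_lt_coe_iff (x : WithBot ℤ) (n : ℤ) :
    x < (n : WithBot ℤ) ↔ x ≤ ((n-1 : ℤ) : WithBot ℤ) := by
  cases x with
  | bot => simp
  | coe a => rw [WithBot.coe_lt_coe, WithBot.coe_le_coe]; omega

lemma wb_add_coe_le (x : WithBot ℤ) (a b : ℤ) :
    x + (a : WithBot ℤ) ≤ (b : WithBot ℤ) ↔ x ≤ ((b - a : ℤ) : WithBot ℤ) := by
  cases x with
  | bot => simp
  | coe c =>
      rw [← WithBot.coe_add, WithBot.coe_le_coe, WithBot.coe_le_coe]; omega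

lemma wb_add_le {x y : WithBot ℤ} {a b : ℤ} (hx : x ≤ (a : WithBot ℤ))
    (hy : y ≤ (b : WithBot ℤ)) : x + y ≤ ((a + b : ℤ) : WithBot ℤ) := by
  rw [WithBot.coe_add]; exact add_le_add hx hy

lemma degZ_add_le (p q : K[X]) : degZ (p+q) ≤ max (degZ p) (degZ q) := by
  rcases eq_or_ne p 0 with rfl | hp
  · simp
  rcases eq_or_ne q 0 with rfl | hq
  · simp
  rcases eq_or_ne (p+q) 0 with h | h
  · simp [h, degZ_zero]
  rw [degZ_of_ne hp, degZ_of_ne hq, degZ_of_ne h]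
  have hb := Polynomial.natDegree_add_le p q
  rcases le_total p.natDegree q.natDegree with hle | hle
  · refine le_trans ?_ (le_max_right _ _)
    rw [WithBot.coe_le_coe]
    exact_mod_cast hb.trans (by omega)
  · refine le_trans ?_ (le_max_left _ _)
    rw [WithBot.coe_le_coe]
    exact_mod_cast hb.trans (by omega)

lemma degZ_sum_le {ι : Type*} (s : Finset ι) (f : ι → K[X]) {b : WithBot ℤ}
    (h : ∀ k ∈ s, degZ (f k) ≤ b) : degZ (∑ k ∈ s, f k) ≤ b := by
  classical
  induction s using Finset.cons_induction with
  | empty => simp [degZ_zero]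
  | cons a s ha ih =>
      rw [Finset.sum_cons]
      exact le_trans (degZ_add_le _ _)
        (max_le (h a (by simp)) (ih fun k hk => h k (by simp [hk])))

lemma coeff_eq_zero_of_degZ_le {p : K[X]} {N : ℕ}
    (h : degZ p ≤ (((N:ℤ)-1 : ℤ) : WithBot ℤ)) : p.coeff N = 0 := by
  rcases eq_or_ne p 0 with rfl | hp
  · simp
  rw [degZ_of_ne hp, WithBot.coe_le_coe] at h
  exact Polynomial.coeff_eq_zero_of_natDegree_lt (by omega)

lemma natDegree_le_of_degZ_le {p : K[X]} {N : ℕ}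
    (h : degZ p ≤ ((N:ℤ) : WithBot ℤ)) : p.natDegree ≤ N := by
  rcases eq_or_ne p 0 with rfl | hp
  · simp
  rw [degZ_of_ne hp, WithBot.coe_le_coe] at h
  exact_mod_cast h

lemma le_sdeg {K : Type*} [Field K] {ι : Type*} [Fintype ι] (s : ι → ℤ)
    (p : ι → Polynomial K) (j : ι) :
    degZ (p j) + (s j : WithBot ℤ) ≤ sdeg s p :=
  Finset.le_sup (f := fun j => degZ (p j) + ((s j : ℤ) : WithBot ℤ)) (Finset.mem_univ j)

lemma wp_facts {K : Type*} [Field K] {m : ℕ} (s : Fin m → ℤ)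
    (P : Matrix (Fin m) (Fin m) (Polynomial K)) (δ : Fin m → ℕ)
    (hdet : P.det ≠ 0) (hpiv : ∀ i, IsPivotIndex s (P i) i)
    (hdeg : ∀ i, (P i i).natDegree = δ i) :
    (∀ i, P i i ≠ 0) ∧
    (∀ i j, degZ (P i j) ≤ (((δ i : ℤ) + s i - s j : ℤ) : WithBot ℤ)) ∧
    (∀ i j, i < j → degZ (P i j) ≤ (((δ i : ℤ) + s i - 1 - s j : ℤ) : WithBot ℤ)) := by
  have hnz : ∀ i, P i i ≠ 0 := by
    intro i hzero
    apply hdet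
    apply Matrix.det_eq_zero_of_row_eq_zero i
    intro j
    have h1 := (hpiv i).1
    rw [hzero, degZ_zero, WithBot.bot_add] at h1
    have hle : degZ (P i j) + (s j : WithBot ℤ) ≤ sdeg s (P i) := le_sdeg s (P i) j
    rw [← h1, le_bot_iff] at hle
    rcases WithBot.add_eq_bot.mp hle with h | h
    · exact degZ_eq_bot_iff.mp h
    · exact absurd h (WithBot.coe_ne_bot)
  have hsdeg : ∀ i, sdeg s (P i) = (((δ i : ℤ) + s i : ℤ) : WithBot ℤ) := by
    intro i
    rw [← (hpiv i).1, degZ_of_ne (hnz i), hdeg i, ← WithBot.coe_add]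
  refine ⟨hnz, fun i j => ?_, fun i j hij => ?_⟩
  · have hle : degZ (P i j) + (s j : WithBot ℤ) ≤ sdeg s (P i) := le_sdeg s (P i) j
    rw [hsdeg i] at hle
    exact (wb_add_coe_le _ _ _).mp hle
  · have hle : degZ (P i j) + (s j : WithBot ℤ) ≤ sdeg s (P i) := le_sdeg s (P i) j
    have hlt := lt_of_le_of_ne hle ((hpiv i).2 j hij)
    rw [hsdeg i, wb_lt_coe_iff] at hlt
    have := (wb_add_coe_le _ _ _).mp hlt
    exact this

end Helpers

/-- product of diagonal weak Popov matrices for compatible shifts is in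
diagonal weak Popov form, with pivot degrees adding up. -/
theorem mul_diag_weak_popov {K : Type*} [Field K] {m : ℕ} (hm : 1 ≤ m) (s : Fin m → ℤ)
    (P1 P2 : Matrix (Fin m) (Fin m) (Polynomial K)) (δ1 δ2 : Fin m → ℕ)
    (h1det : P1.det ≠ 0) (h1piv : ∀ i, IsPivotIndex s (P1 i) i)
    (h1deg : ∀ i, (P1 i i).natDegree = δ1 i)
    (h2det : P2.det ≠ 0)
    (h2piv : ∀ i, IsPivotIndex (fun j => s j + (δ1 j : ℤ)) (P2 i) i)
    (h2deg : ∀ i, (P2 i i).natDegree = δ2 i) :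
    (P2 * P1).det ≠ 0 ∧ (∀ i, IsPivotIndex s ((P2 * P1) i) i) ∧
      ∀ i, ((P2 * P1) i i).natDegree = δ1 i + δ2 i := by
  obtain ⟨h1nz, h1b, h1sb⟩ := wp_facts s P1 δ1 h1det h1piv h1deg
  obtain ⟨h2nz, h2b, h2sb⟩ := wp_facts (fun j => s j + (δ1 j : ℤ)) P2 δ2 h2det h2piv h2deg
  have keyterm : ∀ i j k, (k < j ∨ i < k) → degZ (P2 i k * P1 k j) ≤
      (((δ1 i : ℤ) + δ2 i + s i - s j - 1 : ℤ) : WithBot ℤ) := by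
    intro i j k hc
    rw [degZ_mul]
    rcases hc with h | h
    · have hh := wb_add_le (h2b i k) (h1sb k j h)
      have he : (((δ2 i : ℤ) + (s i + (δ1 i :ℤ)) - (s k + (δ1 k :ℤ))) + ((δ1 k : ℤ) + s k - 1 - s j) : ℤ)
          = (δ1 i : ℤ) + δ2 i + s i - s j - 1 := by ring
      rwa [he] at hh
    · have hh := wb_add_le (h2sb i k h) (h1b k j)
      have he : (((δ2 i : ℤ) + (s i + (δ1 i :ℤ)) - 1 - (s k + (δ1 k :ℤ))) + ((δ1 k : ℤ) + s k - s j) : ℤ)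
          = (δ1 i : ℤ) + δ2 i + s i - s j - 1 := by ring
      rwa [he] at hh
  have key : ∀ i j, degZ ((P2 * P1) i j) ≤
      (((δ1 i : ℤ) + δ2 i + s i - s j : ℤ) : WithBot ℤ) := by
    intro i j
    rw [Matrix.mul_apply]
    apply degZ_sum_le
    intro k _
    rw [degZ_mul]
    have hh := wb_add_le (h2b i k) (h1b k j)
    have he : (((δ2 i : ℤ) + (s i + (δ1 i :ℤ)) - (s k + (δ1 k :ℤ))) + ((δ1 k : ℤ) + s k - s j) : ℤ)
        = (δ1 i : ℤ) + δ2 i + s i - s j := by ring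
    rwa [he] at hh
  have keyS : ∀ i j, i < j → degZ ((P2 * P1) i j) ≤
      (((δ1 i : ℤ) + δ2 i + s i - s j - 1 : ℤ) : WithBot ℤ) := by
    intro i j hij
    rw [Matrix.mul_apply]
    apply degZ_sum_le
    intro k _
    rcases le_or_gt k i with h | h
    · exact keyterm i j k (Or.inl (lt_of_le_of_lt h hij))
    · exact keyterm i j k (Or.inr h)
  have hco : ∀ i, ((P2 * P1) i i).coeff (δ1 i + δ2 i)
      = (P2 i i).leadingCoeff * (P1 i i).leadingCoeff := by
    intro i
    rw [Matrix.mul_apply, Polynomial.finset_sum_coeff]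
    rw [Finset.sum_eq_single i]
    · have h := Polynomial.coeff_mul_degree_add_degree (P2 i i) (P1 i i)
      rw [h2deg i, h1deg i] at h
      rw [Nat.add_comm (δ1 i) (δ2 i)]
      exact h
    · intro k _ hk
      apply coeff_eq_zero_of_degZ_le
      have hb' : degZ (P2 i k * P1 k i) ≤
          (((δ1 i : ℤ) + δ2 i + s i - s i - 1 : ℤ) : WithBot ℤ) := by
        rcases hk.lt_or_gt with h | h
        · exact keyterm i i k (Or.inl h)
        · exact keyterm i i k (Or.inr h)
      refine hb'.trans (le_of_eq ?_)
      rw [WithBot.coe_inj]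
      push_cast
      ring
    · intro h
      exact absurd (Finset.mem_univ i) h
  have hcone : ∀ i, ((P2 * P1) i i).coeff (δ1 i + δ2 i) ≠ 0 := by
    intro i
    rw [hco i]
    exact mul_ne_zero (Polynomial.leadingCoeff_ne_zero.mpr (h2nz i))
      (Polynomial.leadingCoeff_ne_zero.mpr (h1nz i))
  have hub : ∀ i, degZ ((P2 * P1) i i) ≤ (((δ1 i + δ2 i : ℕ) : ℤ) : WithBot ℤ) := by
    intro i
    refine (key i i).trans (le_of_eq ?_)
    rw [WithBot.coe_inj]
    push_cast
    ring
  have hnd : ∀ i, ((P2 * P1) i i).natDegree = δ1 i + δ2 i := fun i =>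
    le_antisymm (natDegree_le_of_degZ_le (hub i)) (Polynomial.le_natDegree_of_ne_zero (hcone i))
  have hQnz : ∀ i, (P2 * P1) i i ≠ 0 := fun i h => hcone i (by simp [h])
  have hdZ : ∀ i, degZ ((P2 * P1) i i) = (((δ1 i : ℤ) + δ2 i : ℤ) : WithBot ℤ) := by
    intro i
    rw [degZ_of_ne (hQnz i), hnd i]
    push_cast
    rfl
  have hsd : ∀ i, sdeg s ((P2 * P1) i) = (((δ1 i : ℤ) + δ2 i + s i : ℤ) : WithBot ℤ) := by
    intro i
    apply le_antisymm
    · apply Finset.sup_le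
      intro j _
      have hh := wb_add_le (key i j) (le_refl ((s j : ℤ) : WithBot ℤ))
      refine hh.trans (le_of_eq ?_)
      rw [WithBot.coe_inj]
      ring
    · have h := le_sdeg s ((P2 * P1) i) i
      rwa [hdZ i, ← WithBot.coe_add] at h
  refine ⟨?_, fun i => ⟨?_, fun k hk => ?_⟩, hnd⟩
  · rw [Matrix.det_mul]
    exact mul_ne_zero h2det h1det
  · rw [hdZ i, hsd i, ← WithBot.coe_add]
  · rw [hsd i]
    apply ne_of_lt
    rw [wb_lt_coe_iff]
    have hb' := wb_add_le (keyS i k hk) (le_refl ((s k : ℤ) : WithBot ℤ))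
    refine hb'.trans (le_of_eq ?_)
    rw [WithBot.coe_inj]
    ring
end

section
/- Let K be a field, m ≥ 1, s ∈ ℤ^m, and let P ∈ K[X]^{m×m} be in s-Popov form with column degree δ = (δ_1,…,δ_m) (so deg P_{jj} = δ_j). Then P is also in (−δ)-Popov form, where −δ = (−δ_1,…,−δ_m), and the (−δ)-row degree of P is (0,…,0). -/
open Polynomial Matrix

/-- a matrix in `s`-Popov form with column degree `δ` is also in
`(-δ)`-Popov form, and its `(-δ)`-row degree is `(0, …, 0)`. -/
theorem popov_is_negMinDeg_popov {K : Type*} [Field K] {m : ℕ} (hm : 1 ≤ m)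
    (s : Fin m → ℤ) (P : Matrix (Fin m) (Fin m) (Polynomial K))
    (hP : IsPopov s P) (δ : Fin m → ℕ) (hδ : ∀ j, (P j j).natDegree = δ j) :
    IsPopov (fun j => -(δ j : ℤ)) P ∧
      ∀ i, sdeg (fun j => -(δ j : ℤ)) (P i) = ((0 : ℤ) : WithBot ℤ) := by
  have hmonic : ∀ i, (P i i).Monic := hP.2.2.1
  have hne : ∀ i, P i i ≠ 0 := fun i => (hmonic i).ne_zero
  have hcol : ∀ i j, i ≠ j → (P i j).degree < (P j j).degree := hP.2.2.2
  have degZ_eq : ∀ p : Polynomial K, p ≠ 0 → degZ p = ((p.natDegree : ℤ) : WithBot ℤ) := by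
    intro p hp
    simp [degZ, Polynomial.degree_eq_natDegree hp, Nat.cast_withBot, WithBot.map_coe]
  have hterm_diag : ∀ i, degZ (P i i) + ((-(δ i : ℤ) : ℤ) : WithBot ℤ) = ((0 : ℤ) : WithBot ℤ) := by
    intro i
    rw [degZ_eq _ (hne i), hδ i, ← WithBot.coe_add]
    norm_num
  have hterm_off : ∀ i j, i ≠ j →
      degZ (P i j) + ((-(δ j : ℤ) : ℤ) : WithBot ℤ) < ((0 : ℤ) : WithBot ℤ) := by
    intro i j hij
    by_cases h0 : P i j = 0
    · simp only [h0, degZ, Polynomial.degree_zero, WithBot.map_bot, WithBot.bot_add]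
      exact WithBot.bot_lt_coe _
    · have hd : (P i j).natDegree < δ j := by
        have := Polynomial.natDegree_lt_natDegree h0 (hcol i j hij)
        rwa [hδ j] at this
      rw [degZ_eq _ h0, ← WithBot.coe_add]
      exact_mod_cast by omega
  have hsdeg : ∀ i, sdeg (fun j => -(δ j : ℤ)) (P i) = ((0 : ℤ) : WithBot ℤ) := by
    intro i
    apply le_antisymm
    · apply Finset.sup_le
      intro j _
      by_cases hji : j = i
      · subst hji; exact le_of_eq (hterm_diag j)
      · exact le_of_lt (hterm_off i j (Ne.symm hji))
    · calc ((0 : ℤ) : WithBot ℤ) = degZ (P i i) + ((-(δ i : ℤ) : ℤ) : WithBot ℤ) :=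
            (hterm_diag i).symm
        _ ≤ _ := Finset.le_sup (f := fun j => degZ (P i j) + ((-(δ j : ℤ) : ℤ) : WithBot ℤ)) (Finset.mem_univ i)
  refine ⟨⟨hP.1, fun i => ⟨?_, fun k hk => ?_⟩, hmonic, hcol⟩, hsdeg⟩
  · rw [hsdeg i]; exact hterm_diag i
  · rw [hsdeg i]
    exact (hterm_off i k (Fin.ne_of_lt hk)).ne
end

section
/- Let K be a field, m ≥ 1, σ = σ1 + σ2 with σ1, σ2 ≥ 1, and let J ∈ K^{σ×σ} be block upper triangular, J = [[J1, J'],[0, J2]] with J1 ∈ K^{σ1×σ1} and J2 ∈ K^{σ2×σ2}. Let E ∈ K^{m×σ}, let E1 ∈ K^{m×σ1} be its first σ1 columns, let P1 ∈ K[X]^{m×m} be an interpolation basis for (E1,J1), let E2 ∈ K^{m×σ2} be the last σ2 columns of P1·E, and let P2 ∈ K[X]^{m×m} be an interpolation basis for (E2,J2). Then the product P2·P1 is an interpolation basis for (E,J). -/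
open Polynomial Matrix

section helpers

variable {K : Type*} [Field K]

lemma myVecMul_sum {ι n m' : Type*} [Fintype n] (v : n → K) (s : Finset ι)
    (M : ι → Matrix n m' K) :
    Matrix.vecMul v (∑ k ∈ s, M k) = ∑ k ∈ s, Matrix.vecMul v (M k) := by
  induction s using Finset.cons_induction with
  | empty => simp
  | cons a s ha ih => simp [Matrix.vecMul_add, ih, Finset.sum_cons]

lemma mySum_vecMul {ι n m' : Type*} [Fintype n] (s : Finset ι) (w : ι → n → K)
    (M : Matrix n m' K) :
    Matrix.vecMul (∑ k ∈ s, w k) M = ∑ k ∈ s, Matrix.vecMul (w k) M := by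
  induction s using Finset.cons_induction with
  | empty => simp
  | cons a s ha ih => simp [Matrix.add_vecMul, ih, Finset.sum_cons]

variable {σ1 σ2 : ℕ}
variable (J1 : Matrix (Fin σ1) (Fin σ1) K) (J' : Matrix (Fin σ1) (Fin σ2) K)
  (J2 : Matrix (Fin σ2) (Fin σ2) K)

lemma aeval_fromBlocks (p : Polynomial K) :
    ∃ B, aeval (Matrix.fromBlocks J1 J' 0 J2) p
      = Matrix.fromBlocks (aeval J1 p) B 0 (aeval J2 p) := by
  induction p using Polynomial.induction_on with
  | C a =>
      refine ⟨0, ?_⟩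
      simp only [aeval_C, Algebra.algebraMap_eq_smul_one]
      rw [← Matrix.fromBlocks_one, Matrix.fromBlocks_smul]
      simp
  | add p q hp hq =>
      obtain ⟨B1, hB1⟩ := hp; obtain ⟨B2, hB2⟩ := hq
      exact ⟨B1 + B2, by rw [map_add, hB1, hB2, Matrix.fromBlocks_add, map_add, map_add, add_zero]⟩
  | monomial n a ih =>
      obtain ⟨B, hB⟩ := ih
      refine ⟨aeval J1 (C a * X ^ n) * J' + B * J2, ?_⟩
      have hx : C a * X ^ (n + 1) = C a * X ^ n * X := by ring
      rw [hx, _root_.map_mul, aeval_X, hB, Matrix.fromBlocks_multiply]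
      simp [_root_.map_mul]

lemma vecMul_aeval_inl (v : Fin σ1 ⊕ Fin σ2 → K) (p : Polynomial K) (t : Fin σ1) :
    Matrix.vecMul v (aeval (Matrix.fromBlocks J1 J' 0 J2) p) (Sum.inl t)
      = Matrix.vecMul (fun l => v (Sum.inl l)) (aeval J1 p) t := by
  obtain ⟨B, hB⟩ := aeval_fromBlocks J1 J' J2 p
  rw [hB]
  simp [Matrix.vecMul, dotProduct, Fintype.sum_sum_type, Matrix.fromBlocks]

lemma vecMul_aeval_inr (v : Fin σ1 ⊕ Fin σ2 → K) (hv : ∀ l, v (Sum.inl l) = 0)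
    (p : Polynomial K) (t : Fin σ2) :
    Matrix.vecMul v (aeval (Matrix.fromBlocks J1 J' 0 J2) p) (Sum.inr t)
      = Matrix.vecMul (fun l => v (Sum.inr l)) (aeval J2 p) t := by
  obtain ⟨B, hB⟩ := aeval_fromBlocks J1 J' J2 p
  rw [hB]
  simp [Matrix.vecMul, dotProduct, Fintype.sum_sum_type, Matrix.fromBlocks, hv]

end helpers


/-- for block upper triangular `J`, the product of an interpolation basis
`P2` for the residual `(E2, J2)` with an interpolation basis `P1` for `(E1, J1)` is an
interpolation basis for `(E, J)`. -/
theorem mul_interpolation_bases {K : Type*} [Field K] {m σ1 σ2 : ℕ}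
    (hm : 1 ≤ m) (h1 : 1 ≤ σ1) (h2 : 1 ≤ σ2)
    (J1 : Matrix (Fin σ1) (Fin σ1) K) (J' : Matrix (Fin σ1) (Fin σ2) K)
    (J2 : Matrix (Fin σ2) (Fin σ2) K)
    (E : Matrix (Fin m) (Fin σ1 ⊕ Fin σ2) K)
    (P1 P2 : Matrix (Fin m) (Fin m) (Polynomial K))
    (h1basis : IsInterpolationBasis (E.submatrix id Sum.inl) J1 P1)
    (h2basis : IsInterpolationBasis
      ((polMulMat P1 E (Matrix.fromBlocks J1 J' 0 J2)).submatrix id Sum.inr) J2 P2) :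
    IsInterpolationBasis E (Matrix.fromBlocks J1 J' 0 J2) (P2 * P1) := by
  classical
  obtain ⟨hli1, hsp1⟩ := h1basis
  obtain ⟨hli2, hsp2⟩ := h2basis
  set J : Matrix (Fin σ1 ⊕ Fin σ2) (Fin σ1 ⊕ Fin σ2) K := Matrix.fromBlocks J1 J' 0 J2 with hJdef
  set E1 : Matrix (Fin m) (Fin σ1) K := E.submatrix id Sum.inl with hE1def
  set F : Matrix (Fin m) (Fin σ1 ⊕ Fin σ2) K := polMulMat P1 E J with hFdef
  set E2 : Matrix (Fin m) (Fin σ2) K := F.submatrix id Sum.inr with hE2def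
  have hmem1 : ∀ p : Fin m → Polynomial K,
      p ∈ Submodule.span (Polynomial K) (Set.range fun i => P1 i) ↔
        IsInterpolant E1 J1 p := by
    intro p
    have := Set.ext_iff.mp hsp1 p
    simpa using this
  have hmem2 : ∀ p : Fin m → Polynomial K,
      p ∈ Submodule.span (Polynomial K) (Set.range fun i => P2 i) ↔
        IsInterpolant E2 J2 p := by
    intro p
    have := Set.ext_iff.mp hsp2 p
    simpa using this
  have hP1row : ∀ k, IsInterpolant E1 J1 (P1 k) :=
    fun k => (hmem1 _).mp (Submodule.subset_span ⟨k, rfl⟩)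
  have hP2row : ∀ k, IsInterpolant E2 J2 (P2 k) :=
    fun k => (hmem2 _).mp (Submodule.subset_span ⟨k, rfl⟩)
  -- the inl-columns of F vanish
  have hF0 : ∀ k t, F k (Sum.inl t) = 0 := by
    intro k t
    have h0 := congrFun (hP1row k) t
    simp only [Finset.sum_apply, Pi.zero_apply] at h0
    show (polMulMat P1 E J) k (Sum.inl t) = 0
    simp only [polMulMat, Finset.sum_apply]
    calc ∑ j, Matrix.vecMul (E j) (aeval J (P1 k j)) (Sum.inl t)
        = ∑ j, Matrix.vecMul (fun l => E j (Sum.inl l)) (aeval J1 (P1 k j)) t := by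
          exact Finset.sum_congr rfl fun j _ => vecMul_aeval_inl J1 J' J2 (E j) (P1 k j) t
      _ = 0 := h0
  -- key computation
  have hkey : ∀ c : Fin m → Polynomial K,
      ∑ j, Matrix.vecMul (E j) (aeval J ((∑ k, c k • P1 k) j))
        = ∑ k, Matrix.vecMul (F k) (aeval J (c k)) := by
    intro c
    calc ∑ j, Matrix.vecMul (E j) (aeval J ((∑ k, c k • P1 k) j))
        = ∑ j, ∑ k, Matrix.vecMul (E j) (aeval J (P1 k j) * aeval J (c k)) := by
          refine Finset.sum_congr rfl fun j _ => ?_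
          rw [show (∑ k, c k • P1 k) j = ∑ k, P1 k j * c k by
            simp [Finset.sum_apply, mul_comm], map_sum]
          rw [show (∑ k, aeval J (P1 k j * c k))
              = ∑ k, (aeval J (P1 k j) * aeval J (c k)) by
            exact Finset.sum_congr rfl fun k _ => _root_.map_mul _ _ _]
          exact myVecMul_sum (E j) Finset.univ _
      _ = ∑ j, ∑ k, Matrix.vecMul (Matrix.vecMul (E j) (aeval J (P1 k j))) (aeval J (c k)) := by
          refine Finset.sum_congr rfl fun j _ => Finset.sum_congr rfl fun k _ => ?_
          rw [Matrix.vecMul_vecMul]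
      _ = ∑ k, ∑ j, Matrix.vecMul (Matrix.vecMul (E j) (aeval J (P1 k j))) (aeval J (c k)) :=
          Finset.sum_comm
      _ = ∑ k, Matrix.vecMul (F k) (aeval J (c k)) := by
          refine Finset.sum_congr rfl fun k _ => ?_
          rw [hFdef]
          show _ = Matrix.vecMul (∑ j, Matrix.vecMul (E j) (aeval J (P1 k j))) (aeval J (c k))
          exact (mySum_vecMul Finset.univ _ _).symm
  -- evaluation of the key sum at inl and inr
  have hinl : ∀ (c : Fin m → Polynomial K) (t : Fin σ1),
      (∑ k, Matrix.vecMul (F k) (aeval J (c k))) (Sum.inl t) = 0 := by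
    intro c t
    simp only [Finset.sum_apply]
    refine Finset.sum_eq_zero fun k _ => ?_
    rw [vecMul_aeval_inl J1 J' J2 (F k) (c k) t]
    have : (fun l => F k (Sum.inl l)) = 0 := funext fun l => hF0 k l
    rw [this, Matrix.zero_vecMul]
    rfl
  have hinr : ∀ (c : Fin m → Polynomial K) (t : Fin σ2),
      (∑ k, Matrix.vecMul (F k) (aeval J (c k))) (Sum.inr t)
        = (∑ k, Matrix.vecMul (E2 k) (aeval J2 (c k))) t := by
    intro c t
    simp only [Finset.sum_apply]
    exact Finset.sum_congr rfl fun k _ =>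
      vecMul_aeval_inr J1 J' J2 (F k) (hF0 k) (c k) t
  -- the central equivalence
  have hiff : ∀ c : Fin m → Polynomial K,
      IsInterpolant E J (∑ k, c k • P1 k) ↔ IsInterpolant E2 J2 c := by
    intro c
    unfold IsInterpolant
    rw [hkey c]
    constructor
    · intro h
      funext t
      have := congrFun h (Sum.inr t)
      rw [hinr c t] at this
      exact this
    · intro h
      funext x
      cases x with
      | inl t => simpa using hinl c t
      | inr t =>
          rw [Pi.zero_apply, hinr c t, h]
          rfl
  -- projection: an interpolant for (E,J) is one for (E1,J1)
  have hproj : ∀ p : Fin m → Polynomial K, IsInterpolant E J p → IsInterpolant E1 J1 p := by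
    intro p hp
    funext t
    have h0 := congrFun hp (Sum.inl t)
    simp only [Finset.sum_apply, Pi.zero_apply] at h0 ⊢
    rw [← h0]
    exact (Finset.sum_congr rfl fun j _ =>
      (vecMul_aeval_inl J1 J' J2 (E j) (p j) t).symm)
  -- row-combination identity
  have hcomb : ∀ d : Fin m → Polynomial K,
      ∑ i, d i • (P2 * P1) i = ∑ k, (Matrix.vecMul d P2 k) • P1 k := by
    intro d
    funext j
    simp only [Finset.sum_apply, Pi.smul_apply, smul_eq_mul, Matrix.mul_apply,
      Matrix.vecMul, dotProduct, Finset.mul_sum, Finset.sum_mul, mul_assoc]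
    exact Finset.sum_comm
  constructor
  · -- linear independence
    rw [Fintype.linearIndependent_iff]
    intro c hc i
    rw [hcomb c] at hc
    have h1 : ∀ k, Matrix.vecMul c P2 k = 0 :=
      Fintype.linearIndependent_iff.mp hli1 _ hc
    have h2 : ∑ k, c k • P2 k = 0 := by
      funext j
      have := h1 j
      simpa [Matrix.vecMul, dotProduct, Finset.sum_apply] using this
    exact Fintype.linearIndependent_iff.mp hli2 c h2 i
  · -- span equality
    ext x
    simp only [SetLike.mem_coe, Set.mem_setOf_eq]
    constructor
    · intro hx
      obtain ⟨d, hd⟩ := (Submodule.mem_span_range_iff_exists_fun (Polynomial K)).mp hx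
      rw [← hd, hcomb d]
      have hc2 : IsInterpolant E2 J2 (Matrix.vecMul d P2) := by
        refine (hmem2 _).mp ?_
        refine (Submodule.mem_span_range_iff_exists_fun (Polynomial K)).mpr ⟨d, ?_⟩
        funext j
        simp [Matrix.vecMul, dotProduct, Finset.sum_apply]
      exact (hiff _).mpr hc2
    · intro hx
      have hx1 : IsInterpolant E1 J1 x := hproj x hx
      obtain ⟨c, hc⟩ := (Submodule.mem_span_range_iff_exists_fun (Polynomial K)).mp ((hmem1 x).mpr hx1)
      have hc2 : IsInterpolant E2 J2 c := (hiff c).mp (by rw [hc]; exact hx)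
      obtain ⟨d, hd⟩ := (Submodule.mem_span_range_iff_exists_fun (Polynomial K)).mp ((hmem2 c).mpr hc2)
      refine (Submodule.mem_span_range_iff_exists_fun (Polynomial K)).mpr ⟨d, ?_⟩
      rw [hcomb d, ← hc]
      refine Finset.sum_congr rfl fun k _ => ?_
      have : Matrix.vecMul d P2 k = c k := by
        rw [← hd]
        simp [Matrix.vecMul, dotProduct, Finset.sum_apply]
      rw [this]
end

section
/- Let K be a field, m ≥ 1, let A ∈ K[X]^{m×m} be nonsingular, let s ∈ ℤ^m, and let σ ∈ ℕ satisfy σ > deg det A. Then there exists t = (t_1,…,t_m) ∈ ℕ^m with min_i t_i = 0, max_i t_i ≤ (m−1)σ, and t_1 + ⋯ + t_m ≤ m²σ/2, such that every matrix P ∈ K[X]^{m×m} in s-Popov form that is left-unimodularly equivalent to A is also in t-Popov form. -/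
open Polynomial Matrix

/-!
In an `s`-Popov form `P` of `A` the diagonal degrees add up to `deg det A < σ`, so every entry of
`P` has degree below `σ`. The pivot conditions therefore only compare differences `s i - s j` with
degree differences smaller than `σ`, and they survive shrinking every gap of length at least `σ`
between the values of `s` to exactly `σ`. In the shrunk shift each index raises the entries of the
indices with larger `s`-value by at most `σ`, which gives `max t ≤ (m - 1)σ` and, counting
pairs, `2 ∑ t ≤ m²σ`.
-/

open Finset

lemma degZ_add_coe {K : Type*} [Field K] {p : K[X]} (hp : p ≠ 0) (a : ℤ) :
    degZ p + (a : WithBot ℤ) = ((p.natDegree + a : ℤ) : WithBot ℤ) := by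
  rw [degZ, degree_eq_natDegree hp, Nat.cast_withBot, WithBot.map_coe, WithBot.coe_add]

lemma degZ_zero_add {K : Type*} [Field K] (a : ℤ) :
    degZ (0 : K[X]) + (a : WithBot ℤ) = ⊥ := by
  simp [degZ]

lemma isPivotIndex_iff {K : Type*} [Field K] {ι : Type*} [Fintype ι] [LinearOrder ι]
    {s : ι → ℤ} {p : ι → K[X]} {i : ι} :
    IsPivotIndex s p i ↔
      (∀ j, degZ (p j) + (s j : WithBot ℤ) ≤ degZ (p i) + (s i : WithBot ℤ)) ∧
      ∀ k, i < k → degZ (p k) + (s k : WithBot ℤ) < degZ (p i) + (s i : WithBot ℤ) := by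
  have hle : ∀ j, degZ (p j) + (s j : WithBot ℤ) ≤ sdeg s p := fun j =>
    le_sup (f := fun j => degZ (p j) + (s j : WithBot ℤ)) (mem_univ j)
  constructor
  · rintro ⟨hmax, hlast⟩
    exact ⟨fun j => hmax ▸ hle j,
      fun k hk => lt_of_le_of_ne (hmax ▸ hle k) (hmax ▸ hlast k hk)⟩
  · rintro ⟨hmax, hlast⟩
    have hsdeg : degZ (p i) + (s i : WithBot ℤ) = sdeg s p :=
      le_antisymm (hle i) (Finset.sup_le fun j _ => hmax j)
    exact ⟨hsdeg, fun k hk => hsdeg ▸ (hlast k hk).ne⟩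

lemma degree_prod_perm_lt_degree_prod_diag {K : Type*} [Field K] {ι : Type*} [Fintype ι]
    [DecidableEq ι] {P : Matrix ι ι K[X]} (hmon : ∀ i, (P i i).Monic)
    (hcol : ∀ i j, i ≠ j → (P i j).degree < (P j j).degree)
    {π : Equiv.Perm ι} (hπ : π ≠ 1) :
    (∏ i, P (π i) i).degree < (∏ i, P i i).degree := by
  have hdiag : (∏ i, P i i).Monic := monic_prod_of_monic _ _ fun i _ => hmon i
  by_cases hzero : ∃ i, P (π i) i = 0
  · obtain ⟨i, hi⟩ := hzero
    rw [prod_eq_zero (f := fun i => P (π i) i) (mem_univ i) hi, degree_zero]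
    exact bot_lt_iff_ne_bot.mpr (degree_ne_bot.mpr hdiag.ne_zero)
  push Not at hzero
  obtain ⟨k, hk⟩ : ∃ k, π k ≠ k := by
    by_contra! h
    exact hπ (Equiv.ext h)
  have hlt : ∀ i, π i ≠ i → (P (π i) i).natDegree < (P i i).natDegree := fun i hi =>
    natDegree_lt_natDegree (hzero i) (hcol _ _ hi)
  rw [degree_eq_natDegree (prod_ne_zero_iff.mpr fun i _ => hzero i),
    degree_eq_natDegree hdiag.ne_zero, Nat.cast_lt,
    natDegree_prod _ _ fun i _ => hzero i, natDegree_prod _ _ fun i _ => (hmon i).ne_zero]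
  refine sum_lt_sum (fun i _ => ?_) ⟨k, mem_univ k, hlt k hk⟩
  by_cases hi : π i = i
  · rw [hi]
  · exact (hlt i hi).le

lemma natDegree_det_eq_sum_natDegree_diag {K : Type*} [Field K] {ι : Type*} [Fintype ι]
    [DecidableEq ι] {P : Matrix ι ι K[X]} (hmon : ∀ i, (P i i).Monic)
    (hcol : ∀ i j, i ≠ j → (P i j).degree < (P j j).degree) :
    P.det.natDegree = ∑ i, (P i i).natDegree := by
  have hdiag : (∏ i, P i i).Monic := monic_prod_of_monic _ _ fun i _ => hmon i
  have hrest : (∑ π ∈ univ.erase 1, Equiv.Perm.sign π • ∏ i, P (π i) i).degree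
      < (∏ i, P i i).degree := by
    refine (degree_sum_le _ _).trans_lt ((Finset.sup_lt_iff ?_).mpr fun π hπ => ?_)
    · exact bot_lt_iff_ne_bot.mpr (degree_ne_bot.mpr hdiag.ne_zero)
    · exact (degree_smul_le _ _).trans_lt
        (degree_prod_perm_lt_degree_prod_diag hmon hcol (ne_of_mem_erase hπ))
  rw [det_apply, ← add_sum_erase _ _ (mem_univ 1)]
  simp only [Equiv.Perm.sign_one, Equiv.Perm.one_apply, one_smul]
  rw [natDegree_add_eq_left_of_degree_lt hrest, natDegree_prod _ _ fun i _ => (hmon i).ne_zero]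

lemma two_mul_card_filter_lt_le {ι α : Type*} [Fintype ι] [LinearOrder α] (f : ι → α) :
    2 * #{p : ι × ι | f p.2 < f p.1} ≤ Fintype.card ι ^ 2 := by
  classical
  set below : Finset (ι × ι) := {p | f p.2 < f p.1}
  set above : Finset (ι × ι) := {p | f p.1 < f p.2}
  have hswap : #below = #above := card_equiv (Equiv.prodComm ι ι) fun p => by simp [below, above]
  have hdisj : Disjoint below above := disjoint_filter.mpr fun _ _ h h' => lt_asymm h h'
  calc 2 * #below = #(below ∪ above) := by rw [card_union_of_disjoint hdisj, ← hswap, two_mul]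
    _ ≤ Fintype.card ι ^ 2 := by
        rw [sq, ← Fintype.card_prod]
        exact card_le_univ _

section CompressedShift

variable {ι : Type*} [Fintype ι] (s : ι → ℤ) (σ : ℕ)

noncomputable def shiftWindows : Finset ℤ :=
  univ.biUnion fun j => Ico (s j) (s j + σ)

/-- The shift obtained from `s` by shrinking every gap of length at least `σ` between its values
to `σ`, normalised to have minimum `0`. -/
noncomputable def compressedShift (i : ι) : ℕ :=
  #{y ∈ shiftWindows s σ | y < s i}

lemma compressedShift_eq_zero {i : ι} (hi : ∀ j, s i ≤ s j) : compressedShift s σ i = 0 := by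
  refine card_eq_zero.mpr (filter_eq_empty_iff.mpr fun y hy => ?_)
  obtain ⟨j, -, hj⟩ := mem_biUnion.mp hy
  exact not_lt.mpr ((hi j).trans (mem_Ico.mp hj).1)

variable {s}

lemma compressedShift_eq_add {a b : ι} (hab : s a ≤ s b) :
    compressedShift s σ b = compressedShift s σ a +
      #{y ∈ shiftWindows s σ | y ∈ Ico (s a) (s b)} := by
  rw [compressedShift, compressedShift, ← card_union_of_disjoint
    (disjoint_filter.mpr fun _ _ hy h => (mem_Ico.mp h).1.not_gt hy), ← filter_or]
  congr 1
  ext y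
  simp only [mem_filter, mem_Ico]
  constructor <;> intro h <;> refine ⟨h.1, ?_⟩ <;> omega

lemma compressedShift_sub_le {a b : ι} (hab : s a ≤ s b) :
    (compressedShift s σ b : ℤ) - compressedShift s σ a ≤ s b - s a := by
  have hcard : #{y ∈ shiftWindows s σ | y ∈ Ico (s a) (s b)} ≤ (s b - s a).toNat := by
    rw [← Int.card_Ico]
    exact card_le_card fun y hy => (mem_filter.mp hy).2
  rw [compressedShift_eq_add σ hab]
  omega

lemma min_le_compressedShift_sub {a b : ι} (hab : s a ≤ s b) :
    min (σ : ℤ) (s b - s a) ≤ (compressedShift s σ b : ℤ) - compressedShift s σ a := by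
  have hcard : (min (s a + σ) (s b) - s a).toNat ≤
      #{y ∈ shiftWindows s σ | y ∈ Ico (s a) (s b)} := by
    rw [← Int.card_Ico]
    refine card_le_card fun y hy => ?_
    obtain ⟨hay, hy⟩ := mem_Ico.mp hy
    refine mem_filter.mpr ⟨mem_biUnion.mpr ⟨a, mem_univ a, ?_⟩, ?_⟩ <;>
      simp only [mem_Ico] <;> omega
  rw [compressedShift_eq_add σ hab]
  omega

lemma add_compressedShift_le_of_add_le {d e : ℤ} (hd : d < e + σ) {i j : ι}
    (h : d + s j ≤ e + s i) : d + compressedShift s σ j ≤ e + compressedShift s σ i := by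
  rcases le_total (s j) (s i) with hji | hij
  · have := min_le_compressedShift_sub σ hji
    omega
  · have := compressedShift_sub_le σ hij
    omega

lemma add_compressedShift_lt_of_add_lt {d e : ℤ} (hd : d < e + σ) {i j : ι}
    (h : d + s j < e + s i) : d + compressedShift s σ j < e + compressedShift s σ i := by
  rcases le_total (s j) (s i) with hji | hij
  · have := min_le_compressedShift_sub σ hji
    omega
  · have := compressedShift_sub_le σ hij
    omega

lemma compressedShift_le_card_mul (i : ι) :
    compressedShift s σ i ≤ #{j | s j < s i} * σ := by
  classical
  calc compressedShift s σ i
      ≤ #(({j | s j < s i} : Finset ι).biUnion fun j => Ico (s j) (s j + σ)) := by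
        refine card_le_card fun y hy => ?_
        obtain ⟨hy, hyi⟩ := mem_filter.mp hy
        obtain ⟨j, -, hj⟩ := mem_biUnion.mp hy
        exact mem_biUnion.mpr
          ⟨j, mem_filter.mpr ⟨mem_univ j, (mem_Ico.mp hj).1.trans_lt hyi⟩, hj⟩
    _ ≤ ∑ j ∈ {j | s j < s i}, #(Ico (s j) (s j + σ)) := card_biUnion_le
    _ = #{j | s j < s i} * σ := by simp

lemma compressedShift_le (i : ι) : compressedShift s σ i ≤ (Fintype.card ι - 1) * σ := by
  classical
  have hcard : #{j | s j < s i} ≤ Fintype.card ι - 1 := by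
    rw [← card_univ, ← card_erase_of_mem (mem_univ i)]
    exact card_le_card fun j hj => mem_erase.mpr
      ⟨fun h => (h ▸ (mem_filter.mp hj).2).false, mem_univ j⟩
  exact (compressedShift_le_card_mul σ i).trans (Nat.mul_le_mul_right σ hcard)

lemma two_mul_sum_compressedShift_le :
    2 * ∑ i, compressedShift s σ i ≤ Fintype.card ι ^ 2 * σ := by
  classical
  have hpairs : ∑ i, #{j | s j < s i} = #{p : ι × ι | s p.2 < s p.1} := by
    rw [card_filter, Fintype.sum_prod_type]
    exact sum_congr rfl fun i _ => card_filter _ _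
  calc 2 * ∑ i, compressedShift s σ i ≤ 2 * ∑ i, #{j | s j < s i} * σ :=
        Nat.mul_le_mul_left 2 (sum_le_sum fun i _ => compressedShift_le_card_mul σ i)
    _ = 2 * #{p : ι × ι | s p.2 < s p.1} * σ := by rw [← sum_mul, hpairs, mul_assoc]
    _ ≤ Fintype.card ι ^ 2 * σ := Nat.mul_le_mul_right σ (two_mul_card_filter_lt_le s)

end CompressedShift

lemma IsPopov.compressedShift {K : Type*} [Field K] {m : ℕ} {s : Fin m → ℤ} {σ : ℕ}
    {P : Matrix (Fin m) (Fin m) K[X]} (hP : IsPopov s P) (hσ : P.det.natDegree < σ) :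
    IsPopov (fun i => (compressedShift s σ i : ℤ)) P := by
  obtain ⟨hdet, hpiv, hmon, hcol⟩ := hP
  have hdiag : ∀ j, (P j j).natDegree < σ := fun j =>
    ((single_le_sum (fun i _ => Nat.zero_le _) (mem_univ j)).trans
      (natDegree_det_eq_sum_natDegree_diag hmon hcol).ge).trans_lt hσ
  have hentry : ∀ i j, P i j ≠ 0 → ((P i j).natDegree : ℤ) < (P i i).natDegree + σ := by
    intro i j hij
    have : (P i j).natDegree < σ := by
      rcases eq_or_ne i j with rfl | hne
      · exact hdiag i
      · exact (natDegree_lt_natDegree hij (hcol i j hne)).trans (hdiag j)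
    omega
  refine ⟨hdet, fun i => ?_, hmon, hcol⟩
  obtain ⟨hle, hlt⟩ := isPivotIndex_iff.mp (hpiv i)
  have hii : P i i ≠ 0 := (hmon i).ne_zero
  refine isPivotIndex_iff.mpr ⟨fun j => ?_, fun k hk => ?_⟩
  · by_cases hij : P i j = 0
    · rw [hij, degZ_zero_add]
      exact bot_le
    have hs := hle j
    rw [degZ_add_coe hij, degZ_add_coe hii, WithBot.coe_le_coe] at hs ⊢
    exact add_compressedShift_le_of_add_le σ (hentry i j hij) hs
  · by_cases hik : P i k = 0
    · rw [hik, degZ_zero_add, degZ_add_coe hii]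
      exact WithBot.bot_lt_coe _
    have hs := hlt k hk
    rw [degZ_add_coe hik, degZ_add_coe hii, WithBot.coe_lt_coe] at hs ⊢
    exact add_compressedShift_lt_of_add_lt σ (hentry i k hik) hs

theorem reduce_shift_entries_general {K : Type*} [Field K] {m : ℕ} (hm : 1 ≤ m)
    (A : Matrix (Fin m) (Fin m) (Polynomial K))
    (s : Fin m → ℤ) (σ : ℕ) (hσ : (A.det).natDegree < σ) :
    ∃ t : Fin m → ℕ, (∃ i, t i = 0) ∧ (∀ i, t i ≤ (m - 1) * σ) ∧
      2 * ∑ i, t i ≤ m ^ 2 * σ ∧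
      ∀ P U : Matrix (Fin m) (Fin m) (Polynomial K),
        (∃ c : K, c ≠ 0 ∧ U.det = Polynomial.C c) → P = U * A → IsPopov s P →
          IsPopov (fun i => (t i : ℤ)) P := by
  have : Nonempty (Fin m) := ⟨⟨0, hm⟩⟩
  obtain ⟨i₀, -, hi₀⟩ := exists_min_image univ s univ_nonempty
  refine ⟨compressedShift s σ,
    ⟨i₀, compressedShift_eq_zero s σ fun j => hi₀ j (mem_univ j)⟩,
    fun i => by simpa using compressedShift_le σ i,
    by simpa using two_mul_sum_compressedShift_le (s := s) σ, ?_⟩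
  rintro P U ⟨c, -, hU⟩ rfl hP
  have hdet : (U * A).det = C c * A.det := by rw [det_mul, hU]
  exact hP.compressedShift (hdet ▸ (natDegree_C_mul_le c A.det).trans_lt hσ)

/-- reducing the entries of the shift. For nonsingular `A` and
`σ > deg det A`, there is a shift `t ∈ ℕ^m` with `min t = 0`, `max t ≤ (m-1)σ`, and
`∑ t ≤ m²σ/2`, such that any `s`-Popov form left-unimodularly equivalent to `A` is
also in `t`-Popov form. -/
theorem reduce_shift_entries {K : Type*} [Field K] {m : ℕ} (hm : 1 ≤ m)
    (A : Matrix (Fin m) (Fin m) (Polynomial K)) (hA : A.det ≠ 0)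
    (s : Fin m → ℤ) (σ : ℕ) (hσ : (A.det).natDegree < σ) :
    ∃ t : Fin m → ℕ, (∃ i, t i = 0) ∧ (∀ i, t i ≤ (m - 1) * σ) ∧
      2 * ∑ i, t i ≤ m ^ 2 * σ ∧
      ∀ P U : Matrix (Fin m) (Fin m) (Polynomial K),
        (∃ c : K, c ≠ 0 ∧ U.det = Polynomial.C c) → P = U * A → IsPopov s P →
          IsPopov (fun i => (t i : ℤ)) P :=
  reduce_shift_entries_general hm A s σ hσ
end

section
/- Let K be a field, m ≥ 1, s = (s_1,…,s_m) ∈ ℤ^m, and let W ∈ K[X]^{m×m} be nonsingular and in s-weak Popov form with s-row degree (d_1,…,d_m). Then d_1 + ⋯ + d_m = deg det(W) + (s_1 + ⋯ + s_m). -/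
open Polynomial Matrix

lemma degZ_eq_natDegree {K : Type*} [Field K] {p : Polynomial K} (hp : p ≠ 0) :
    degZ p = ((p.natDegree : ℤ) : WithBot ℤ) := by
  rw [degZ, Polynomial.degree_eq_natDegree hp]
  rfl

lemma coeff_prod_aux {K : Type*} [Field K] {ι : Type*} (t : Finset ι)
    (f : ι → Polynomial K) (g : ι → ℕ) (h : ∀ i ∈ t, (f i).natDegree ≤ g i) :
    (∏ i ∈ t, f i).coeff (∑ i ∈ t, g i) = ∏ i ∈ t, (f i).coeff (g i) := by
  induction t using Finset.cons_induction with
  | empty => simp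
  | cons a t ha ih =>
    rw [Finset.prod_cons, Finset.sum_cons, Finset.prod_cons,
      Polynomial.coeff_mul_add_eq_of_natDegree_le (h a (Finset.mem_cons_self a t))
        (le_trans (Polynomial.natDegree_prod_le _ _)
          (Finset.sum_le_sum fun i hi => h i (Finset.mem_cons_of_mem hi))),
      ih (fun i hi => h i (Finset.mem_cons_of_mem hi))]

lemma perm_pivot_aux {m : ℕ} (piv : Fin m → Fin m) (hinj : Function.Injective piv)
    (σ : Equiv.Perm (Fin m)) (h : ∀ i, i ≤ piv (σ i)) : ∀ i, piv (σ i) = i := by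
  have hsum : ∑ i : Fin m, ((piv (σ i) : ℕ)) = ∑ i : Fin m, (i : ℕ) := by
    rw [Equiv.sum_comp σ (fun x => ((piv x : ℕ)))]
    exact Equiv.sum_comp (Equiv.ofBijective piv (Finite.injective_iff_bijective.mp hinj))
      (fun x => (x : ℕ))
  have h2 := (Finset.sum_eq_sum_iff_of_le
    (fun (i : Fin m) _ => Fin.le_iff_val_le_val.mp (h i))).mp hsum.symm
  intro i
  exact Fin.val_injective ((h2 i (Finset.mem_univ i)).symm)

/-- for a nonsingular matrix `W` in `s`-weak Popov form with `s`-row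
degree `(d 1, …, d m)`, one has `∑ d i = deg det W + ∑ s i`. -/
theorem sum_row_degree_weak_popov {K : Type*} [Field K] {m : ℕ} (hm : 1 ≤ m)
    (s : Fin m → ℤ) (W : Matrix (Fin m) (Fin m) (Polynomial K)) (hdet : W.det ≠ 0)
    (piv : Fin m → Fin m) (hpiv : ∀ i, IsPivotIndex s (W i) (piv i))
    (hinj : Function.Injective piv)
    (d : Fin m → ℤ) (hd : ∀ i, sdeg s (W i) = (d i : WithBot ℤ)) :
    ∑ i, d i = ((W.det).natDegree : ℤ) + ∑ i, s i := by
  classical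
  -- basic pivot facts
  have hpivne : ∀ i, W i (piv i) ≠ 0 := by
    intro i h0
    have h1 := (hpiv i).1
    rw [hd i, h0] at h1
    simp [degZ] at h1
  have hpivdeg : ∀ i, ((W i (piv i)).natDegree : ℤ) + s (piv i) = d i := by
    intro i
    have h1 := (hpiv i).1
    rw [hd i, degZ_eq_natDegree (hpivne i)] at h1
    exact_mod_cast h1
  have hle : ∀ i j, W i j ≠ 0 → ((W i j).natDegree : ℤ) + s j ≤ d i := by
    intro i j h0
    have h1 : degZ (W i j) + (s j : WithBot ℤ) ≤ sdeg s (W i) :=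
      Finset.le_sup (f := fun k => degZ (W i k) + (s k : WithBot ℤ)) (Finset.mem_univ j)
    rw [hd i, degZ_eq_natDegree h0] at h1
    exact_mod_cast h1
  have hlt : ∀ i j, piv i < j → W i j ≠ 0 → ((W i j).natDegree : ℤ) + s j < d i := by
    intro i j hj h0
    have h1 : degZ (W i j) + (s j : WithBot ℤ) ≤ sdeg s (W i) :=
      Finset.le_sup (f := fun k => degZ (W i k) + (s k : WithBot ℤ)) (Finset.mem_univ j)
    have h2 := (hpiv i).2 j hj
    rw [hd i, degZ_eq_natDegree h0] at h1 h2
    have h3 : ((W i j).natDegree : ℤ) + s j ≤ d i := by exact_mod_cast h1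
    have h4 : ((W i j).natDegree : ℤ) + s j ≠ d i := by exact_mod_cast h2
    exact lt_of_le_of_ne h3 h4
  -- shifting constants
  set c : ℤ := ∑ j, |s j| with hc
  have hsc : ∀ j, 0 ≤ s j + c := by
    intro j
    have h1 : |s j| ≤ c := Finset.single_le_sum (fun i _ => abs_nonneg (s i)) (Finset.mem_univ j)
    have h2 := neg_abs_le (s j)
    linarith
  set a : Fin m → ℕ := fun j => (s j + c).toNat with hadef
  have haz : ∀ j, (a j : ℤ) = s j + c := fun j => Int.toNat_of_nonneg (hsc j)
  have hdc : ∀ i, 0 ≤ d i + c := by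
    intro i
    have h1 := hpivdeg i
    have h2 := hsc (piv i)
    have h3 : (0:ℤ) ≤ ((W i (piv i)).natDegree : ℤ) := Int.natCast_nonneg _
    linarith
  set b : Fin m → ℕ := fun i => (d i + c).toNat with hbdef
  have hbz : ∀ i, (b i : ℤ) = d i + c := fun i => Int.toNat_of_nonneg (hdc i)
  -- the shifted matrix
  set M : Matrix (Fin m) (Fin m) (Polynomial K) := fun i j => W i j * X ^ a j with hMdef
  have hdetM : M.det = W.det * X ^ (∑ j, a j) := by
    have hMeq : M = W * Matrix.diagonal (fun j => (X : Polynomial K) ^ a j) := by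
      funext i j
      rw [Matrix.mul_diagonal]
    rw [hMeq, Matrix.det_mul, Matrix.det_diagonal, Finset.prod_pow_eq_pow_sum]
  have hMnd : ∀ i j, W i j ≠ 0 → (M i j).natDegree = (W i j).natDegree + a j := by
    intro i j h0
    simp only [hMdef]
    rw [Polynomial.natDegree_mul h0 (pow_ne_zero _ Polynomial.X_ne_zero),
      Polynomial.natDegree_X_pow]
  have hMdeg : ∀ i j, (M i j).natDegree ≤ b i := by
    intro i j
    by_cases h0 : W i j = 0
    · simp [hMdef, h0]
    · rw [hMnd i j h0]
      have h1 := hle i j h0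
      have h2 := haz j
      have h3 := hbz i
      omega
  set L : Matrix (Fin m) (Fin m) K := fun i j => (M i j).coeff (b i) with hLdef
  have hL0 : ∀ i j, piv i < j → L i j = 0 := by
    intro i j hj
    by_cases h0 : W i j = 0
    · simp [hLdef, hMdef, h0]
    · apply Polynomial.coeff_eq_zero_of_natDegree_lt
      rw [hMnd i j h0]
      have h1 := hlt i j hj h0
      have h2 := haz j
      have h3 := hbz i
      omega
  have hMpivnd : ∀ i, (M i (piv i)).natDegree = b i := by
    intro i
    rw [hMnd i (piv i) (hpivne i)]
    have h1 := hpivdeg i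
    have h2 := haz (piv i)
    have h3 := hbz i
    omega
  have hMpivne : ∀ i, M i (piv i) ≠ 0 := fun i =>
    mul_ne_zero (hpivne i) (pow_ne_zero _ Polynomial.X_ne_zero)
  have hLpiv : ∀ i, L i (piv i) ≠ 0 := by
    intro i
    show (M i (piv i)).coeff (b i) ≠ 0
    rw [← hMpivnd i, Polynomial.coeff_natDegree]
    exact Polynomial.leadingCoeff_ne_zero.mpr (hMpivne i)
  set B : ℕ := ∑ i, b i with hBdef
  have hBσ : ∀ σ : Equiv.Perm (Fin m), ∑ i, b (σ i) = B := fun σ => Equiv.sum_comp σ b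
  have hkey : ∀ σ : Equiv.Perm (Fin m), (∏ i, M (σ i) i).coeff B = ∏ i, L (σ i) i := by
    intro σ
    rw [← hBσ σ]
    exact coeff_prod_aux Finset.univ (fun i => M (σ i) i) (fun i => b (σ i))
      (fun i _ => hMdeg (σ i) i)
  have hcoeffB : (M.det).coeff B = L.det := by
    rw [Matrix.det_apply, Matrix.det_apply, Polynomial.finset_sum_coeff]
    refine Finset.sum_congr rfl fun σ _ => ?_
    rw [Units.smul_def, Units.smul_def, Polynomial.coeff_smul, hkey σ]
  -- det L ≠ 0
  set π : Equiv.Perm (Fin m) := Equiv.ofBijective piv (Finite.injective_iff_bijective.mp hinj)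
    with hπdef
  have hπ : ∀ x, π x = piv x := fun x => rfl
  have hdetL : L.det ≠ 0 := by
    rw [Matrix.det_apply, Finset.sum_eq_single π.symm]
    · have hprod : (∏ i, L (π.symm i) i) ≠ 0 := by
        rw [Finset.prod_ne_zero_iff]
        intro i _
        have he : piv (π.symm i) = i := by rw [← hπ]; exact π.apply_symm_apply i
        have := hLpiv (π.symm i)
        rwa [he] at this
      rcases Int.units_eq_one_or (Equiv.Perm.sign π.symm) with h | h <;> rw [h] <;> simpa
    · intro σ _ hσ
      by_cases hz : (∏ i, L (σ i) i) = 0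
      · rw [hz, smul_zero]
      · exfalso
        apply hσ
        have hfac : ∀ i, L (σ i) i ≠ 0 := by
          intro i hi
          exact hz (Finset.prod_eq_zero (Finset.mem_univ i) hi)
        have hlep : ∀ i, i ≤ piv (σ i) := by
          intro i
          by_contra hcon
          exact hfac i (hL0 (σ i) i (lt_of_not_ge hcon))
        have hpeq := perm_pivot_aux piv hinj σ hlep
        apply Equiv.ext
        intro i
        have h5 : π (σ i) = i := by rw [hπ]; exact hpeq i
        have h6 := congrArg π.symm h5
        rwa [π.symm_apply_apply] at h6
    · intro h
      exact absurd (Finset.mem_univ _) h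
  have hcoeffne : (M.det).coeff B ≠ 0 := by rw [hcoeffB]; exact hdetL
  have hdegle : (M.det).natDegree ≤ B := by
    rw [Matrix.det_apply]
    apply Polynomial.natDegree_sum_le_of_forall_le
    intro σ _
    have h1 : (Equiv.Perm.sign σ • ∏ i, M (σ i) i).natDegree ≤ (∏ i, M (σ i) i).natDegree := by
      rcases Int.units_eq_one_or (Equiv.Perm.sign σ) with h | h <;> rw [h] <;> simp
    refine h1.trans ((Polynomial.natDegree_prod_le _ _).trans ?_)
    rw [← hBσ σ]
    exact Finset.sum_le_sum fun i _ => hMdeg (σ i) i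
  have hndM : (M.det).natDegree = B :=
    le_antisymm hdegle (Polynomial.le_natDegree_of_ne_zero hcoeffne)
  have hndM2 : (M.det).natDegree = (W.det).natDegree + ∑ j, a j := by
    rw [hdetM, Polynomial.natDegree_mul hdet (pow_ne_zero _ Polynomial.X_ne_zero),
      Polynomial.natDegree_X_pow]
  have hfin : (B : ℤ) = ((W.det).natDegree : ℤ) + ∑ j, (a j : ℤ) := by
    rw [← hndM, hndM2]
    push_cast
    ring
  have h1 : (B : ℤ) = ∑ i, d i + m * c := by
    rw [hBdef]
    push_cast
    rw [Finset.sum_congr rfl fun i _ => hbz i, Finset.sum_add_distrib, Finset.sum_const,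
      Finset.card_univ, Fintype.card_fin, nsmul_eq_mul]
  have h2 : (∑ j, (a j : ℤ)) = ∑ j, s j + m * c := by
    rw [Finset.sum_congr rfl fun j _ => haz j, Finset.sum_add_distrib, Finset.sum_const,
      Finset.card_univ, Fintype.card_fin, nsmul_eq_mul]
  rw [h1, h2] at hfin
  linarith
end
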